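/- Every balanced complex orthogonal design (BCOD) is, after a permutation of its rows, the direct sum of finitely many indecomposable BCODs. -/

import Mathlib

open Matrix

/-- A formal entry of a complex orthogonal design: either `0`, or `± z_i`, or `± z_i^*`.
Here `sign = true` means sign `+1`, and `conj = true` means the conjugated symbol `z_i^*`. -/
inductive CODEntry (k : ℕ) : Type where
  | zero : CODEntry k
  | var (sign : Bool) (conj : Bool) (idx : Fin k) : CODEntry k
deriving DecidableEq

namespace CODEntry

variable {k k' : ℕ}

/-- Evaluate a formal entry at an assignment of complex values to the indeterminates. -/
def eval (z : Fin k → ℂ) : CODEntry k → ℂ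
  | zero => 0
  | var s c i => (if s then (1 : ℂ) else -1) * (if c then (starRingEnd ℂ) (z i) else z i)

/-- Formal negation of an entry. -/
def neg : CODEntry k → CODEntry k
  | zero => zero
  | var s c i => var (!s) c i

/-- Formal conjugation of an entry (with `0^* = 0`). -/
def conj : CODEntry k → CODEntry k
  | zero => zero
  | var s c i => var s (!c) i

/-- Optionally negate an entry. -/
def negIf (b : Bool) (e : CODEntry k) : CODEntry k := if b then e.neg else e

/-- Rename variables according to a permutation of the indices. -/
def rename (σ : Equiv.Perm (Fin k)) : CODEntry k → CODEntry k
  | zero => zero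
  | var s c i => var s c (σ i)

/-- Negate all instances of the variable `z_j`. -/
def negVar (j : Fin k) : CODEntry k → CODEntry k
  | zero => zero
  | var s c i => if i = j then var (!s) c i else var s c i

/-- Conjugate all instances of the variable `z_j` (swap `z_j ↔ z_j^*`). -/
def conjVar (j : Fin k) : CODEntry k → CODEntry k
  | zero => zero
  | var s c i => if i = j then var s (!c) i else var s c i

/-- Transport an entry along a map of variable index sets. -/
def mapIdx (f : Fin k → Fin k') : CODEntry k → CODEntry k'
  | zero => zero
  | var s c i => var s c (f i)

/-- Whether a (nonzero) entry is a conjugated symbol `± z_i^*`. -/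
def isConj : CODEntry k → Bool
  | zero => false
  | var _ c _ => c

/-- The index of the variable occurring in an entry, if any. -/
def index : CODEntry k → Option (Fin k)
  | zero => none
  | var _ _ i => some i

end CODEntry

/-- `G` is a `[p, n, k]` complex orthogonal design (COD): for every assignment of complex
values to the indeterminates, `Gᴴ * G = (|z_1|² + … + |z_k|²) • I_n`. -/
def IsCOD {p n k : ℕ} (G : Matrix (Fin p) (Fin n) (CODEntry k)) : Prop :=
  ∀ z : Fin k → ℂ,
    (G.map (CODEntry.eval z))ᴴ * (G.map (CODEntry.eval z)) =
      ((∑ i, Complex.normSq (z i) : ℝ) : ℂ) • (1 : Matrix (Fin n) (Fin n) ℂ)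

/-- The equivalence operations on `[p, n, k]` CODs. -/
inductive EquivOp (p n k : ℕ) : Type where
  | rowPerm (σ : Equiv.Perm (Fin p))
  | rowNeg (r : Fin p)
  | colPerm (σ : Equiv.Perm (Fin n))
  | colNeg (c : Fin n)
  | varRename (σ : Equiv.Perm (Fin k))
  | varNeg (i : Fin k)
  | varConj (i : Fin k)

namespace EquivOp

variable {p n k : ℕ}

/-- Apply an equivalence operation to a matrix of formal entries. -/
def apply (G : Matrix (Fin p) (Fin n) (CODEntry k)) :
    EquivOp p n k → Matrix (Fin p) (Fin n) (CODEntry k)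
  | rowPerm σ => fun r c => G (σ r) c
  | rowNeg r₀ => fun r c => if r = r₀ then (G r c).neg else G r c
  | colPerm σ => fun r c => G r (σ c)
  | colNeg c₀ => fun r c => if c = c₀ then (G r c).neg else G r c
  | varRename σ => fun r c => (G r c).rename σ
  | varNeg i => fun r c => (G r c).negVar i
  | varConj i => fun r c => (G r c).conjVar i

/-- The operation is a column permutation. -/
def IsColPerm : EquivOp p n k → Prop
  | colPerm _ => True
  | _ => False

/-- The operation is a column negation. -/
def IsColNeg : EquivOp p n k → Prop
  | colNeg _ => True
  | _ => False

/-- The operation is a variable renaming. -/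
def IsVarRename : EquivOp p n k → Prop
  | varRename _ => True
  | _ => False

/-- Where each row of the original matrix is sent by the operation. -/
def rowMap : EquivOp p n k → Equiv.Perm (Fin p)
  | rowPerm σ => σ⁻¹
  | _ => 1

end EquivOp

/-- Apply a finite sequence of equivalence operations, in order. -/
def applyOps {p n k : ℕ} (G : Matrix (Fin p) (Fin n) (CODEntry k))
    (ops : List (EquivOp p n k)) : Matrix (Fin p) (Fin n) (CODEntry k) :=
  ops.foldl EquivOp.apply G

/-- Where each row of the original matrix is sent by a sequence of operations. -/
def opsRowMap {p n k : ℕ} (ops : List (EquivOp p n k)) : Equiv.Perm (Fin p) :=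
  ops.foldl (fun τ op => op.rowMap * τ) 1

/-- An operation on a COD with `m + m` columns is column-restricted if, in case it is a
column permutation, it is the transposition of columns `i` and `m + i` for some `i`. -/
def EquivOp.ColumnRestricted {p m k : ℕ} : EquivOp p (m + m) k → Prop
  | .colPerm σ => ∃ i : Fin m, σ = Equiv.swap (Fin.castAdd m i) (Fin.natAdd m i)
  | _ => True

/-- `G` contains the `B_i` form submatrix on the `2m` rows selected by the embedding `f`:
the block matrix `((z_i I_m, M), (−Mᴴ, z_i^* I_m))` where `M` is the top-right block. -/
def ContainsBFormWith {p m k : ℕ} (G : Matrix (Fin p) (Fin (m + m)) (CODEntry k))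
    (i : Fin k) (f : Fin (m + m) ↪ Fin p) : Prop :=
  (∀ r s : Fin m, G (f (Fin.castAdd m r)) (Fin.castAdd m s) =
      if r = s then CODEntry.var true false i else CODEntry.zero) ∧
  (∀ r s : Fin m, G (f (Fin.natAdd m r)) (Fin.natAdd m s) =
      if r = s then CODEntry.var true true i else CODEntry.zero) ∧
  (∀ r s : Fin m, G (f (Fin.natAdd m r)) (Fin.castAdd m s) =
      ((G (f (Fin.castAdd m s)) (Fin.natAdd m r)).conj).neg)

/-- As `ContainsBFormWith`, and moreover the top-right block `M` is (formally)
skew-symmetric: `Mᵀ = −M`. -/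
def ContainsSkewBFormWith {p m k : ℕ} (G : Matrix (Fin p) (Fin (m + m)) (CODEntry k))
    (i : Fin k) (f : Fin (m + m) ↪ Fin p) : Prop :=
  ContainsBFormWith G i f ∧
  ∀ r s : Fin m, G (f (Fin.castAdd m s)) (Fin.natAdd m r) =
    (G (f (Fin.castAdd m r)) (Fin.natAdd m s)).neg

/-- `G` is in `B_i` form: after equivalence operations excluding column permutations
(and not renaming variables), it contains the `B_i` form submatrix. -/
def InBForm {p m k : ℕ} (G : Matrix (Fin p) (Fin (m + m)) (CODEntry k)) (i : Fin k) : Prop :=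
  ∃ ops : List (EquivOp p (m + m) k),
    (∀ op ∈ ops, ¬ op.IsColPerm ∧ ¬ op.IsVarRename) ∧
    ∃ f, ContainsBFormWith (applyOps G ops) i f

/-- `G` is in `B_i` form with skew-symmetric block `M_i`. -/
def InSkewBForm {p m k : ℕ} (G : Matrix (Fin p) (Fin (m + m)) (CODEntry k)) (i : Fin k) : Prop :=
  ∃ ops : List (EquivOp p (m + m) k),
    (∀ op ∈ ops, ¬ op.IsColPerm ∧ ¬ op.IsVarRename) ∧
    ∃ f, ContainsSkewBFormWith (applyOps G ops) i f

/-- `G` is a balanced complex orthogonal design (BCOD) with `2m` columns: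
a COD in which every row has exactly `m` zero entries (hence `m` nonzero ones),
every row is conjugation-separated, and for each variable `z_j` it is in `B_j` form
with skew-symmetric block `M_j`. -/
def IsBCOD {p m k : ℕ} (G : Matrix (Fin p) (Fin (m + m)) (CODEntry k)) : Prop :=
  IsCOD G ∧
  (∀ r : Fin p, (Finset.univ.filter fun c => G r c = CODEntry.zero).card = m) ∧
  (∀ r : Fin p,
      (∀ c, G r c ≠ CODEntry.zero → (G r c).isConj = true) ∨
      (∀ c, G r c ≠ CODEntry.zero → (G r c).isConj = false)) ∧
  (∀ j : Fin k, InSkewBForm G j)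

/-- `G` is the direct sum of `G₁` (on top) and `G₂` (below), where `G₁` and `G₂` use
disjoint sets of indeterminates, embedded into `Fin k` via `ι₁` and `ι₂`. -/
def IsDirectSumOf {p n k p₁ p₂ k₁ k₂ : ℕ} (hp : p = p₁ + p₂)
    (G : Matrix (Fin p) (Fin n) (CODEntry k))
    (G₁ : Matrix (Fin p₁) (Fin n) (CODEntry k₁))
    (G₂ : Matrix (Fin p₂) (Fin n) (CODEntry k₂))
    (ι₁ : Fin k₁ ↪ Fin k) (ι₂ : Fin k₂ ↪ Fin k) : Prop :=
  k = k₁ + k₂ ∧ (∀ a b, ι₁ a ≠ ι₂ b) ∧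
  ∀ (r : Fin p) (c : Fin n),
    if h : (r : ℕ) < p₁ then G r c = (G₁ ⟨(r : ℕ), h⟩ c).mapIdx (fun i => ι₁ i)
    else G r c = (G₂ ⟨(r : ℕ) - p₁, by have := r.isLt; omega⟩ c).mapIdx (fun i => ι₂ i)

/-- A COD is decomposable if, after a permutation of its rows, it can be expressed as
the direct sum of two (nonempty) CODs on disjoint sets of indeterminates. -/
def IsDecomposable {p n k : ℕ} (G : Matrix (Fin p) (Fin n) (CODEntry k)) : Prop :=
  ∃ (σ : Equiv.Perm (Fin p)) (p₁ p₂ k₁ k₂ : ℕ) (hp : p = p₁ + p₂)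
    (G₁ : Matrix (Fin p₁) (Fin n) (CODEntry k₁))
    (G₂ : Matrix (Fin p₂) (Fin n) (CODEntry k₂))
    (ι₁ : Fin k₁ ↪ Fin k) (ι₂ : Fin k₂ ↪ Fin k),
    0 < p₁ ∧ 0 < p₂ ∧ IsCOD G₁ ∧ IsCOD G₂ ∧
    IsDirectSumOf hp (fun r c => G (σ r) c) G₁ G₂ ι₁ ι₂

/-- Rows `r₁` and `r₂` of `G` form a pair: if `r₁` is `(α₁,…,α_m, β₁,…,β_m)` then `r₂`
is `(±β₁^*,…,±β_m^*, ±α₁^*,…,±α_m^*)` (the signs may differ from entry to entry). -/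
def IsPairRows {p m k : ℕ} (G : Matrix (Fin p) (Fin (m + m)) (CODEntry k))
    (r₁ r₂ : Fin p) : Prop :=
  ∀ s : Fin m,
    (∃ b : Bool, G r₂ (Fin.castAdd m s) = CODEntry.negIf b ((G r₁ (Fin.natAdd m s)).conj)) ∧
    (∃ b : Bool, G r₂ (Fin.natAdd m s) = CODEntry.negIf b ((G r₁ (Fin.castAdd m s)).conj))

/-- `G` is (literally, with respect to its row order) the direct sum of finitely many
indecomposable BCODs, stacked from top to bottom. -/
inductive SumOfIndecomposableBCODs {m : ℕ} :
    {p k : ℕ} → Matrix (Fin p) (Fin (m + m)) (CODEntry k) → Prop where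
  | single {p k : ℕ} {G : Matrix (Fin p) (Fin (m + m)) (CODEntry k)}
      (h1 : IsBCOD G) (h2 : ¬ IsDecomposable G) : SumOfIndecomposableBCODs G
  | cons {p k p₁ p₂ k₁ k₂ : ℕ} (hp : p = p₁ + p₂)
      {G : Matrix (Fin p) (Fin (m + m)) (CODEntry k)}
      {G₁ : Matrix (Fin p₁) (Fin (m + m)) (CODEntry k₁)}
      {G₂ : Matrix (Fin p₂) (Fin (m + m)) (CODEntry k₂)}
      (ι₁ : Fin k₁ ↪ Fin k) (ι₂ : Fin k₂ ↪ Fin k)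
      (h1 : IsBCOD G₁) (h2 : ¬ IsDecomposable G₁)
      (hrest : SumOfIndecomposableBCODs G₂)
      (hsum : IsDirectSumOf hp G G₁ G₂ ι₁ ι₂) : SumOfIndecomposableBCODs G


/-!
Split a decomposable BCOD into two summands and recurse on the number of rows. The summands are
again BCODs: balance and conjugation-separation are conditions on single rows, and the `B_j` form
of a variable `z_j` of a summand occupies rows containing `z_j`, all of which lie in that summand.
To restrict a `B_j` form to those rows, note that the allowed equivalence operations amount to a
row permutation followed by independent sign changes of rows, columns and variables and
conjugations of variables, and that every such pattern is realised by allowed operations.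
Since direct sums are associative, the indecomposable pieces of the two summands stack up.
-/

namespace CODEntry

variable {k k' k'' : ℕ}

def twist (ν κ : Fin k → Bool) : CODEntry k → CODEntry k
  | zero => zero
  | var s c i => var (xor (ν i) s) (xor (κ i) c) i

@[simp] lemma twist_false (e : CODEntry k) : twist (fun _ => false) (fun _ => false) e = e := by
  cases e <;> simp [twist]

lemma negIf_negIf (x y : Bool) (e : CODEntry k) : negIf x (negIf y e) = negIf (xor x y) e := by
  cases e <;> cases x <;> cases y <;> simp [negIf, neg]

lemma ite_neg_eq_negIf (P : Prop) [Decidable P] (e : CODEntry k) :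
    (if P then e.neg else e) = negIf (decide P) e := by
  by_cases h : P <;> simp [h, negIf]

lemma negVar_negIf (j : Fin k) (x : Bool) (e : CODEntry k) :
    negVar j (negIf x e) = negIf x (negVar j e) := by
  cases e with
  | zero => cases x <;> rfl
  | var s c i => by_cases h : i = j <;> cases x <;> simp [negVar, negIf, neg, h]

lemma conjVar_negIf (j : Fin k) (x : Bool) (e : CODEntry k) :
    conjVar j (negIf x e) = negIf x (conjVar j e) := by
  cases e with
  | zero => cases x <;> rfl
  | var s c i => by_cases h : i = j <;> cases x <;> simp [conjVar, negIf, neg, h]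

lemma negVar_twist (j : Fin k) (ν κ : Fin k → Bool) (e : CODEntry k) :
    negVar j (twist ν κ e) = twist (fun i => xor (ν i) (decide (i = j))) κ e := by
  cases e with
  | zero => rfl
  | var s c i => by_cases h : i = j <;> simp [twist, negVar, h]

lemma conjVar_twist (j : Fin k) (ν κ : Fin k → Bool) (e : CODEntry k) :
    conjVar j (twist ν κ e) = twist ν (fun i => xor (κ i) (decide (i = j))) e := by
  cases e with
  | zero => rfl
  | var s c i => by_cases h : i = j <;> simp [twist, conjVar, h]

@[simp] lemma index_negIf (x : Bool) (e : CODEntry k) : (negIf x e).index = e.index := by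
  cases e <;> cases x <;> rfl

@[simp] lemma index_twist (ν κ : Fin k → Bool) (e : CODEntry k) :
    (twist ν κ e).index = e.index := by
  cases e <;> rfl

lemma mem_range_of_index_mapIdx {f : Fin k → Fin k'} {e : CODEntry k} {i : Fin k'}
    (h : (mapIdx f e).index = some i) : i ∈ Set.range f := by
  cases e with
  | zero => cases h
  | var s c j => exact ⟨j, Option.some.inj h⟩

@[simp] lemma mapIdx_eq_zero_iff (f : Fin k → Fin k') (e : CODEntry k) :
    mapIdx f e = zero ↔ e = zero := by
  cases e <;> simp [mapIdx]

@[simp] lemma isConj_mapIdx (f : Fin k → Fin k') (e : CODEntry k) :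
    (mapIdx f e).isConj = e.isConj := by
  cases e <;> rfl

lemma mapIdx_injective {f : Fin k → Fin k'} (hf : Function.Injective f) :
    Function.Injective (mapIdx f) := by
  intro a b hab
  cases a <;> cases b <;> simp_all [mapIdx]
  exact hf hab.2.2

@[simp] lemma mapIdx_id (e : CODEntry k) : mapIdx id e = e := by
  cases e <;> rfl

lemma mapIdx_mapIdx (f : Fin k' → Fin k'') (g : Fin k → Fin k') (e : CODEntry k) :
    mapIdx f (mapIdx g e) = mapIdx (f ∘ g) e := by
  cases e <;> rfl

lemma mapIdx_neg (f : Fin k → Fin k') (e : CODEntry k) : mapIdx f e.neg = (mapIdx f e).neg := by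
  cases e <;> rfl

lemma mapIdx_conj (f : Fin k → Fin k') (e : CODEntry k) :
    mapIdx f e.conj = (mapIdx f e).conj := by
  cases e <;> rfl

lemma mapIdx_negIf (f : Fin k → Fin k') (x : Bool) (e : CODEntry k) :
    mapIdx f (negIf x e) = negIf x (mapIdx f e) := by
  cases e <;> cases x <;> rfl

lemma twist_mapIdx (ν κ : Fin k' → Bool) (f : Fin k → Fin k') (e : CODEntry k) :
    twist ν κ (mapIdx f e) = mapIdx f (twist (ν ∘ f) (κ ∘ f) e) := by
  cases e <;> rfl

end CODEntry

open CODEntry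

section Flips

variable {p n k : ℕ}

/-- Indexes the pairwise commuting operations: negating a row, negating a column, negating a
variable, conjugating a variable. -/
abbrev Flip (p n k : ℕ) := Fin p ⊕ Fin n ⊕ Fin k ⊕ Fin k

def Flip.op : Flip p n k → EquivOp p n k
  | .inl r => .rowNeg r
  | .inr (.inl c) => .colNeg c
  | .inr (.inr (.inl i)) => .varNeg i
  | .inr (.inr (.inr i)) => .varConj i

/-- The result of applying the flips `x` with `θ x = true` to `G`, in any order. -/
def flipped (θ : Flip p n k → Bool) (G : Matrix (Fin p) (Fin n) (CODEntry k)) :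
    Matrix (Fin p) (Fin n) (CODEntry k) := fun r c =>
  negIf (xor (θ (.inl r)) (θ (.inr (.inl c))))
    (twist (fun i => θ (.inr (.inr (.inl i)))) (fun i => θ (.inr (.inr (.inr i)))) (G r c))

@[simp] lemma flipped_false (G : Matrix (Fin p) (Fin n) (CODEntry k)) :
    flipped (fun _ => false) G = G := by
  funext r c
  simp [flipped, negIf]

@[simp] lemma index_flipped (θ : Flip p n k → Bool) (G : Matrix (Fin p) (Fin n) (CODEntry k))
    (r : Fin p) (c : Fin n) : (flipped θ G r c).index = (G r c).index := by
  simp [flipped]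

lemma Flip.op_apply_flipped (x : Flip p n k) (θ : Flip p n k → Bool)
    (G : Matrix (Fin p) (Fin n) (CODEntry k)) :
    x.op.apply (flipped θ G) = flipped (fun y => xor (θ y) (decide (y = x))) G := by
  funext r c
  rcases x with r₀ | c₀ | i₀ | i₀ <;>
    simp only [Flip.op, EquivOp.apply, flipped, ite_neg_eq_negIf, negIf_negIf, negVar_negIf,
      conjVar_negIf, negVar_twist, conjVar_twist] <;>
    simp [Bool.xor_comm, Bool.xor_left_comm]

end Flips

section NormalForm

variable {p n k : ℕ}

/-- The operations permitted in `InBForm`. -/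
def EquivOp.Allowed (op : EquivOp p n k) : Prop := ¬ op.IsColPerm ∧ ¬ op.IsVarRename

lemma Flip.op_allowed (x : Flip p n k) : x.op.Allowed := by
  rcases x with _ | _ | _ | _ <;> exact ⟨id, id⟩

lemma applyOps_cons (G : Matrix (Fin p) (Fin n) (CODEntry k)) (op : EquivOp p n k)
    (ops : List (EquivOp p n k)) : applyOps G (op :: ops) = applyOps (op.apply G) ops :=
  rfl

lemma applyOps_append_singleton (G : Matrix (Fin p) (Fin n) (CODEntry k))
    (ops : List (EquivOp p n k)) (op : EquivOp p n k) :
    applyOps G (ops ++ [op]) = op.apply (applyOps G ops) := by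
  simp [applyOps]

lemma exists_applyOps_flipped_eq_flipped_xor (s : Finset (Flip p n k)) :
    ∃ ops : List (EquivOp p n k), (∀ op ∈ ops, op.Allowed) ∧ ∀ G θ,
      applyOps (flipped θ G) ops = flipped (fun y => xor (θ y) (decide (y ∈ s))) G := by
  induction s using Finset.induction_on with
  | empty => exact ⟨[], by simp, fun G θ => by simp [applyOps]⟩
  | insert x s hx ih =>
    obtain ⟨ops, hops, h⟩ := ih
    refine ⟨x.op :: ops, ?_, fun G θ => ?_⟩
    · simpa [x.op_allowed] using hops
    rw [applyOps_cons, Flip.op_apply_flipped, h]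
    congr 1
    funext y
    by_cases hy : y = x
    · subst hy
      simp [hx]
    · simp [hy]

lemma exists_applyOps_eq_flipped (θ : Flip p n k → Bool) :
    ∃ ops : List (EquivOp p n k), (∀ op ∈ ops, op.Allowed) ∧
      ∀ G, applyOps G ops = flipped θ G := by
  obtain ⟨ops, hops, h⟩ := exists_applyOps_flipped_eq_flipped_xor (Finset.univ.filter (θ ·))
  exact ⟨ops, hops, fun G => by simpa using h G fun _ => false⟩

lemma exists_applyOps_eq_flipped_comp (G : Matrix (Fin p) (Fin n) (CODEntry k))
    (ops : List (EquivOp p n k)) (hops : ∀ op ∈ ops, op.Allowed) :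
    ∃ (π : Equiv.Perm (Fin p)) (θ : Flip p n k → Bool),
      applyOps G ops = fun r c => flipped θ G (π r) c := by
  induction ops using List.reverseRecOn with
  | nil => exact ⟨1, fun _ => false, by simp [applyOps]⟩
  | append_singleton ops op ih =>
    obtain ⟨π, θ, h⟩ := ih fun o ho => hops o (List.mem_append_left _ ho)
    have hop : op.Allowed := hops op (by simp)
    rw [applyOps_append_singleton, h]
    have hflip : ∀ x : Flip p n k, (fun r c => x.op.apply (flipped θ G) (π r) c) =
        fun r c => flipped (fun y => xor (θ y) (decide (y = x))) G (π r) c := fun x => by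
      rw [Flip.op_apply_flipped]
    cases op with
    | rowPerm σ => exact ⟨σ.trans π, θ, rfl⟩
    | rowNeg r₀ =>
      refine ⟨π, _, Eq.trans ?_ (hflip (.inl (π r₀)))⟩
      funext r c
      simp [EquivOp.apply, Flip.op, π.injective.eq_iff]
    | colNeg c₀ => exact ⟨π, _, hflip (.inr (.inl c₀))⟩
    | varNeg i₀ => exact ⟨π, _, hflip (.inr (.inr (.inl i₀)))⟩
    | varConj i₀ => exact ⟨π, _, hflip (.inr (.inr (.inr i₀)))⟩
    | colPerm σ => exact absurd trivial hop.1
    | varRename σ => exact absurd trivial hop.2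

lemma inSkewBForm_iff {m : ℕ} (G : Matrix (Fin p) (Fin (m + m)) (CODEntry k)) (i : Fin k) :
    InSkewBForm G i ↔ ∃ θ f, ContainsSkewBFormWith (flipped θ G) i f := by
  constructor
  · rintro ⟨ops, hops, f, hB⟩
    obtain ⟨π, θ, h⟩ := exists_applyOps_eq_flipped_comp G ops hops
    rw [h] at hB
    exact ⟨θ, f.trans π.toEmbedding, hB⟩
  · rintro ⟨θ, f, hB⟩
    obtain ⟨ops, hops, h⟩ := exists_applyOps_eq_flipped (n := m + m) θ
    exact ⟨ops, hops, f, (h G).symm ▸ hB⟩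

end NormalForm

section Rows

variable {p q m k ks : ℕ} {G : Matrix (Fin p) (Fin (m + m)) (CODEntry k)}
  {Gs : Matrix (Fin q) (Fin (m + m)) (CODEntry ks)} {ι : Fin ks ↪ Fin k} {ρ : Fin q ↪ Fin p}

lemma flipped_apply_of_rows {n : ℕ} {G : Matrix (Fin p) (Fin n) (CODEntry k)}
    {Gs : Matrix (Fin q) (Fin n) (CODEntry ks)}
    (hρ : ∀ u c, G (ρ u) c = (Gs u c).mapIdx ι) (θ : Flip p n k → Bool) (u : Fin q) (c : Fin n) :
    flipped θ G (ρ u) c =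
      (flipped (θ ∘ Sum.map ρ (Sum.map id (Sum.map ι ι))) Gs u c).mapIdx ι := by
  simp only [flipped, hρ, twist_mapIdx, mapIdx_negIf]
  rfl

lemma ContainsBFormWith.index_diag {i : Fin k} {f : Fin (m + m) ↪ Fin p}
    (h : ContainsBFormWith G i f) (u : Fin (m + m)) : (G (f u) u).index = some i := by
  refine Fin.addCases (fun r => ?_) (fun r => ?_) u
  · rw [h.1 r r, if_pos rfl]; rfl
  · rw [h.2.1 r r, if_pos rfl]; rfl

lemma ContainsSkewBFormWith.of_rows (hρ : ∀ u c, G (ρ u) c = (Gs u c).mapIdx ι) {j : Fin ks}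
    {f : Fin (m + m) ↪ Fin q} (h : ContainsSkewBFormWith G (ι j) (f.trans ρ)) :
    ContainsSkewBFormWith Gs j f := by
  obtain ⟨⟨h₁, h₂, h₃⟩, h₄⟩ := h
  have inj := mapIdx_injective ι.injective
  refine ⟨⟨fun r s => inj ?_, fun r s => inj ?_, fun r s => inj ?_⟩, fun r s => inj ?_⟩
  · rw [← hρ, apply_ite (mapIdx ι)]
    exact h₁ r s
  · rw [← hρ, apply_ite (mapIdx ι)]
    exact h₂ r s
  · rw [mapIdx_neg, mapIdx_conj, ← hρ, ← hρ]
    exact h₃ r s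
  · rw [mapIdx_neg, ← hρ, ← hρ]
    exact h₄ r s

lemma InSkewBForm.of_rows (hρ : ∀ u c, G (ρ u) c = (Gs u c).mapIdx ι) {j : Fin ks}
    (hcover : ∀ r c, (G r c).index = some (ι j) → r ∈ Set.range ρ)
    (h : InSkewBForm G (ι j)) : InSkewBForm Gs j := by
  rw [inSkewBForm_iff] at h ⊢
  obtain ⟨θ, f, hB⟩ := h
  have hf : ∀ u, f u ∈ Set.range ρ := fun u =>
    hcover _ u (by simpa using hB.1.index_diag u)
  choose f₁ hf₁ using hf
  have hf₁inj : Function.Injective f₁ := fun u v huv =>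
    f.injective (by rw [← hf₁, ← hf₁, huv])
  have hf₁ρ : (⟨f₁, hf₁inj⟩ : Fin (m + m) ↪ Fin q).trans ρ = f := by
    ext u
    simp [hf₁]
  exact ⟨_, ⟨f₁, hf₁inj⟩, .of_rows (flipped_apply_of_rows hρ θ) (hf₁ρ ▸ hB)⟩

lemma IsCOD.rowPerm {n : ℕ} {G : Matrix (Fin p) (Fin n) (CODEntry k)} (h : IsCOD G)
    (σ : Equiv.Perm (Fin p)) : IsCOD (fun r c => G (σ r) c) := by
  intro z
  rw [← h z]
  ext i j
  simp only [Matrix.mul_apply, Matrix.conjTranspose_apply, Matrix.map_apply]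
  exact Fintype.sum_equiv σ _ _ fun _ => rfl

lemma IsBCOD.of_rows (hG : IsBCOD G) (hρ : ∀ u c, G (ρ u) c = (Gs u c).mapIdx ι)
    (hcover : ∀ r c j, (G r c).index = some (ι j) → r ∈ Set.range ρ) (hs : IsCOD Gs) :
    IsBCOD Gs := by
  obtain ⟨-, hzero, hconj, hB⟩ := hG
  exact ⟨hs, fun u => by simpa [hρ] using hzero (ρ u), fun u => by simpa [hρ] using hconj (ρ u),
    fun j => (hB (ι j)).of_rows hρ fun r c => hcover r c j⟩

lemma IsBCOD.rowPerm (hG : IsBCOD G) (σ : Equiv.Perm (Fin p)) :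
    IsBCOD (fun r c => G (σ r) c) :=
  hG.of_rows (ι := .refl _) (ρ := σ.toEmbedding) (fun _ _ => (mapIdx_id _).symm)
    (fun r _ _ _ => ⟨σ.symm r, by simp⟩) (hG.1.rowPerm σ)

end Rows

def Fin.appendEmbedding {α : Type*} {a b : ℕ} (f : Fin a ↪ α) (g : Fin b ↪ α)
    (h : ∀ i j, f i ≠ g j) : Fin (a + b) ↪ α :=
  ⟨Fin.append f g, Fin.append_injective_iff.2 ⟨f.injective, g.injective, h⟩⟩

section DirectSum

variable {n k k₁ k₂ : ℕ}

lemma isDirectSumOf_iff {p p₁ p₂ : ℕ} (hp : p = p₁ + p₂) {G : Matrix (Fin p) (Fin n) (CODEntry k)}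
    {A : Matrix (Fin p₁) (Fin n) (CODEntry k₁)} {B : Matrix (Fin p₂) (Fin n) (CODEntry k₂)}
    {ι₁ : Fin k₁ ↪ Fin k} {ι₂ : Fin k₂ ↪ Fin k} :
    IsDirectSumOf hp G A B ι₁ ι₂ ↔ k = k₁ + k₂ ∧ (∀ a b, ι₁ a ≠ ι₂ b) ∧
      (∀ r c, G (Fin.cast hp.symm (Fin.castAdd p₂ r)) c = (A r c).mapIdx ι₁) ∧
      (∀ r c, G (Fin.cast hp.symm (Fin.natAdd p₁ r)) c = (B r c).mapIdx ι₂) := by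
  subst hp
  refine and_congr_right fun _ => and_congr_right fun _ =>
    ⟨fun h => ⟨fun r c => ?_, fun r c => ?_⟩, fun ⟨hA, hB⟩ r c => ?_⟩
  · simpa using h (Fin.castAdd p₂ r) c
  · simpa using h (Fin.natAdd p₁ r) c
  · cases r using Fin.addCases with
    | left r => simpa using hA r c
    | right r => simpa using hB r c

def stackSum {p₁ p₂ : ℕ} (A : Matrix (Fin p₁) (Fin n) (CODEntry k₁))
    (B : Matrix (Fin p₂) (Fin n) (CODEntry k₂)) :
    Matrix (Fin (p₁ + p₂)) (Fin n) (CODEntry (k₁ + k₂)) :=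
  Fin.append (fun r c => (A r c).mapIdx (Fin.castAdd k₂))
    (fun r c => (B r c).mapIdx (Fin.natAdd k₁))

lemma isDirectSumOf_stackSum {p₁ p₂ : ℕ} (A : Matrix (Fin p₁) (Fin n) (CODEntry k₁))
    (B : Matrix (Fin p₂) (Fin n) (CODEntry k₂)) :
    IsDirectSumOf rfl (stackSum A B) A B (Fin.castAddEmb k₂) (Fin.natAddEmb k₁) := by
  rw [isDirectSumOf_iff]
  refine ⟨rfl, fun a b => ?_, fun r c => ?_, fun r c => ?_⟩
  · simp [Fin.ext_iff]
    omega
  · exact congrFun (Fin.append_left _ _ r) c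
  · exact congrFun (Fin.append_right _ _ r) c

lemma IsDirectSumOf.assoc {p pa pb q₁ q₂ ka kb l₁ l₂ : ℕ} {hp : p = pa + pb}
    {hpa : pa = q₁ + q₂} {G : Matrix (Fin p) (Fin n) (CODEntry k)}
    {A : Matrix (Fin pa) (Fin n) (CODEntry ka)} {B : Matrix (Fin pb) (Fin n) (CODEntry kb)}
    {A₁ : Matrix (Fin q₁) (Fin n) (CODEntry l₁)} {A₂ : Matrix (Fin q₂) (Fin n) (CODEntry l₂)}
    {ι₁ : Fin ka ↪ Fin k} {ι₂ : Fin kb ↪ Fin k} {j₁ : Fin l₁ ↪ Fin ka} {j₂ : Fin l₂ ↪ Fin ka}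
    (h : IsDirectSumOf hp G A B ι₁ ι₂) (hA : IsDirectSumOf hpa A A₁ A₂ j₁ j₂)
    (hp' : p = q₁ + (q₂ + pb)) :
    IsDirectSumOf hp' G A₁ (stackSum A₂ B) (j₁.trans ι₁)
      (Fin.appendEmbedding (j₂.trans ι₁) ι₂ fun a b => h.2.1 (j₂ a) b) := by
  subst hp hpa
  obtain ⟨hk, hd, hl, hr⟩ := (isDirectSumOf_iff rfl).1 h
  obtain ⟨hkA, hdA, hlA, hrA⟩ := (isDirectSumOf_iff rfl).1 hA
  simp only [Fin.cast_eq_self] at hl hr hlA hrA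
  rw [isDirectSumOf_iff]
  refine ⟨by omega, fun a b => ?_, fun r c => ?_, fun r c => ?_⟩
  · cases b using Fin.addCases with
    | left b => simpa [Fin.appendEmbedding] using ι₁.injective.ne (hdA a b)
    | right b => simpa [Fin.appendEmbedding] using hd (j₁ a) b
  · have hrow : Fin.cast hp'.symm (Fin.castAdd (q₂ + pb) r) = Fin.castAdd pb (Fin.castAdd q₂ r) :=
      Fin.ext rfl
    rw [hrow, hl, hlA, mapIdx_mapIdx]
    rfl
  · cases r using Fin.addCases with
    | left r =>
      have hrow : Fin.cast hp'.symm (Fin.natAdd q₁ (Fin.castAdd pb r)) =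
          Fin.castAdd pb (Fin.natAdd q₁ r) := Fin.ext rfl
      rw [hrow, hl, hrA, mapIdx_mapIdx, stackSum, Fin.append_left, mapIdx_mapIdx]
      congr 1
      funext i
      simp [Fin.appendEmbedding]
    | right r =>
      have hrow : Fin.cast hp'.symm (Fin.natAdd q₁ (Fin.natAdd q₂ r)) =
          Fin.natAdd (q₁ + q₂) r := Fin.ext (Nat.add_assoc _ _ _).symm
      rw [hrow, hr, stackSum, Fin.append_right, mapIdx_mapIdx]
      congr 1
      funext i
      simp [Fin.appendEmbedding]

lemma IsDirectSumOf.rowPerm {p₁ p₂ : ℕ} {G : Matrix (Fin (p₁ + p₂)) (Fin n) (CODEntry k)}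
    {A : Matrix (Fin p₁) (Fin n) (CODEntry k₁)} {B : Matrix (Fin p₂) (Fin n) (CODEntry k₂)}
    {ι₁ : Fin k₁ ↪ Fin k} {ι₂ : Fin k₂ ↪ Fin k} (h : IsDirectSumOf rfl G A B ι₁ ι₂)
    (σ₁ : Equiv.Perm (Fin p₁)) (σ₂ : Equiv.Perm (Fin p₂)) :
    IsDirectSumOf rfl (fun r c => G (finSumFinEquiv.permCongr (σ₁.sumCongr σ₂) r) c)
      (fun r c => A (σ₁ r) c) (fun r c => B (σ₂ r) c) ι₁ ι₂ := by
  obtain ⟨hk, hd, hl, hr⟩ := (isDirectSumOf_iff rfl).1 h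
  refine (isDirectSumOf_iff rfl).2 ⟨hk, hd, fun r c => ?_, fun r c => ?_⟩
  · simpa using hl (σ₁ r) c
  · simpa using hr (σ₂ r) c

end DirectSum

section Summands

variable {p₁ p₂ m k k₁ k₂ : ℕ} {G : Matrix (Fin (p₁ + p₂)) (Fin (m + m)) (CODEntry k)}
  {A : Matrix (Fin p₁) (Fin (m + m)) (CODEntry k₁)}
  {B : Matrix (Fin p₂) (Fin (m + m)) (CODEntry k₂)} {ι₁ : Fin k₁ ↪ Fin k} {ι₂ : Fin k₂ ↪ Fin k}

lemma IsBCOD.left_of_isDirectSumOf (hG : IsBCOD G) (h : IsDirectSumOf rfl G A B ι₁ ι₂)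
    (hA : IsCOD A) : IsBCOD A := by
  obtain ⟨-, hd, hl, hr⟩ := (isDirectSumOf_iff rfl).1 h
  simp only [Fin.cast_eq_self] at hl hr
  refine hG.of_rows (ρ := Fin.castAddEmb p₂) hl (fun r c j hj => ?_) hA
  cases r using Fin.addCases with
  | left r => exact ⟨r, rfl⟩
  | right r =>
    obtain ⟨b, hb⟩ := mem_range_of_index_mapIdx (hr r c ▸ hj)
    exact absurd hb.symm (hd j b)

lemma IsBCOD.right_of_isDirectSumOf (hG : IsBCOD G) (h : IsDirectSumOf rfl G A B ι₁ ι₂)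
    (hB : IsCOD B) : IsBCOD B := by
  obtain ⟨-, hd, hl, hr⟩ := (isDirectSumOf_iff rfl).1 h
  simp only [Fin.cast_eq_self] at hl hr
  refine hG.of_rows (ρ := Fin.natAddEmb p₁) hr (fun r c j hj => ?_) hB
  cases r using Fin.addCases with
  | left r =>
    obtain ⟨a, ha⟩ := mem_range_of_index_mapIdx (hl r c ▸ hj)
    exact absurd ha (hd a j)
  | right r => exact ⟨r, rfl⟩

end Summands

theorem SumOfIndecomposableBCODs.directSum {m pa ka : ℕ}
    {A : Matrix (Fin pa) (Fin (m + m)) (CODEntry ka)} (hA : SumOfIndecomposableBCODs A)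
    {pb kb : ℕ} {B : Matrix (Fin pb) (Fin (m + m)) (CODEntry kb)}
    (hB : SumOfIndecomposableBCODs B) {p k : ℕ} {G : Matrix (Fin p) (Fin (m + m)) (CODEntry k)}
    {hp : p = pa + pb} {ι₁ : Fin ka ↪ Fin k} {ι₂ : Fin kb ↪ Fin k}
    (h : IsDirectSumOf hp G A B ι₁ ι₂) : SumOfIndecomposableBCODs G := by
  induction hA generalizing p k with
  | single h₁ h₂ => exact .cons hp ι₁ ι₂ h₁ h₂ hB h
  | cons _ _ _ h₁ h₂ _ hsumA ih =>
    exact .cons _ _ _ h₁ h₂ (ih (isDirectSumOf_stackSum _ B)) (h.assoc hsumA (by omega))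

/-- every BCOD is, after a permutation of its rows, the direct sum of
finitely many indecomposable BCODs. -/
theorem bcod_decomposes_into_indecomposables {p m k : ℕ}
    (G : Matrix (Fin p) (Fin (m + m)) (CODEntry k)) (hG : IsBCOD G) :
    ∃ σ : Equiv.Perm (Fin p), SumOfIndecomposableBCODs (fun r c => G (σ r) c) := by
  induction p using Nat.strong_induction_on generalizing k with
  | _ p ih =>
  by_cases hdec : IsDecomposable G
  · obtain ⟨σ, p₁, p₂, k₁, k₂, rfl, G₁, G₂, ι₁, ι₂, hp₁, hp₂, hG₁, hG₂, hsum⟩ := hdec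
    obtain ⟨σ₁, h₁⟩ := ih p₁ (by omega) G₁ ((hG.rowPerm σ).left_of_isDirectSumOf hsum hG₁)
    obtain ⟨σ₂, h₂⟩ := ih p₂ (by omega) G₂ ((hG.rowPerm σ).right_of_isDirectSumOf hsum hG₂)
    exact ⟨(finSumFinEquiv.permCongr (σ₁.sumCongr σ₂)).trans σ,
      h₁.directSum h₂ (hsum.rowPerm σ₁ σ₂)⟩
  · exact ⟨1, .single hG hdec⟩
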